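/- Suppose αₙ, …, α₁, α₀ are countable ordinals with αᵢ < γ for all i, where γ is an epsilon number. Then k(σ(Ω^n·αₙ + … + Ω·α₁ + α₀)) < γ, where σ(δ) denotes the maximal order type of δ* given by Schmidt's formula: σ(δ) = ω^(ω^(δ−1)) if δ is finite and positive, σ(δ) = ω^(ω^(δ+1)) if δ = ε + m with ε an epsilon number and m < ω, and σ(δ) = ω^(ω^δ) otherwise. -/

import Mathlib

/-- `Ω`, the first uncountable ordinal `ω₁`. -/
noncomputable def Omega1 : Ordinal.{0} := (Cardinal.aleph 1).ord

/-- `KMem β α` expresses `β ∈ K(α)`, where `K(0) = {0}` and, for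
`α = Ω^{α₁}·β₁ + … + Ω^{αₙ}·βₙ` in base-`Ω` Cantor normal form,
`K(α) = {β₁,…,βₙ} ∪ K(α₁) ∪ … ∪ K(αₙ)`. -/
inductive KMem : Ordinal.{0} → Ordinal.{0} → Prop
  | zero : KMem 0 0
  | coeff {α e c : Ordinal.{0}} : (e, c) ∈ Ordinal.CNF Omega1 α → KMem c α
  | expo {α e c β : Ordinal.{0}} : (e, c) ∈ Ordinal.CNF Omega1 α → KMem β e → KMem β α

/-- `k(α) = max K(α)` (as a supremum; `K(α)` is finite for `α < ε_{Ω+1}`). -/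
noncomputable def kMax (α : Ordinal.{0}) : Ordinal.{0} := sSup {β | KMem β α}

/-- Membership in `P`, the class of additively closed ordinals `{ω^ξ : ξ ∈ On}`. -/
def AddClosed (ζ : Ordinal.{0}) : Prop := ∃ ξ : Ordinal.{0}, ζ = Ordinal.omega0 ^ ξ

/-- The collapsing function `ϑ`: `ϑ(α)` is the least `ζ ∈ P` such that `k(α) < ζ` and
for all `β < α` with `k(β) < ζ` one has `ϑ(β) < ζ`. -/
noncomputable def theta : Ordinal.{0} → Ordinal.{0} :=
  Ordinal.lt_wf.fix (C := fun _ => Ordinal.{0}) fun α IH =>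
    sInf {ζ : Ordinal.{0} | AddClosed ζ ∧ kMax α < ζ ∧
      ∀ (β : Ordinal.{0}) (h : β < α), kMax β < ζ → IH β h < ζ}

/-- `ε_{Ω+1}`, the least epsilon number above `Ω`. -/
noncomputable def epsOmega1 : Ordinal.{0} :=
  Ordinal.nfp (fun a => Ordinal.omega0 ^ a) (Omega1 + 1)

/-- The tower `Ω_n[1]`: `Ω_0[1] = 1` and `Ω_{n+1}[1] = Ω ^ Ω_n[1]`. -/
noncomputable def OmegaTower : ℕ → Ordinal.{0}
  | 0 => 1
  | nn + 1 => Omega1 ^ OmegaTower nn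

/-- The Howard–Bachmann ordinal `ϑ(ε_{Ω+1}) = sup_{n<ω} ϑ(Ω_n[1])`. -/
noncomputable def HowardBachmann : Ordinal.{0} := ⨆ nn : ℕ, theta (OmegaTower nn)

open Classical in
/-- Schmidt's formula `σ(δ)` for the maximal order type `o(X*)` of the Higman ordering
on finite sequences over a wpo `X` with `o(X) = δ`. -/
noncomputable def sigmaStar (δ : Ordinal.{0}) : Ordinal.{0} :=
  if 0 < δ ∧ δ < Ordinal.omega0 then
    Ordinal.omega0 ^ (Ordinal.omega0 ^ (δ - 1))
  else if ∃ (ε : Ordinal.{0}) (mm : ℕ), Ordinal.omega0 ^ ε = ε ∧ δ = ε + (mm : Ordinal) then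
    Ordinal.omega0 ^ (Ordinal.omega0 ^ (δ + 1))
  else
    Ordinal.omega0 ^ (Ordinal.omega0 ^ δ)

/-- The polynomial `Ω^n·αₙ + … + Ω·α₁ + α₀`. -/
noncomputable def omegaPolySum (a : ℕ → Ordinal.{0}) : ℕ → Ordinal.{0}
  | 0 => a 0
  | nn + 1 => Omega1 ^ ((nn + 1 : ℕ) : Ordinal) * a (nn + 1) + omegaPolySum a nn

/-! Write `δ = Ω * q + α₀` with `q = Ω^(n-1)·αₙ + … + α₁`. If `q = 0`, then `σ(δ) < γ` because
`γ = ω^γ` is closed under `+` and `ω^·`, and `K(σ(δ))` contains nothing above `σ(δ)`. Otherwise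
`σ(δ) = ω^ω^(δ+t)` with `t ≤ 1`, and since `ω^Ω = Ω` this equals `Ω^(Ω^(q-1) · ω^(α₀+t))`, already
in base-`Ω` normal form. Its coefficients are `1`, `ω^(α₀+t)` and those of `q - 1`, which is `q`
or finite; those of `q` are the `αᵢ` and the finite exponents. All of them lie below `γ`, and as
`K(α)` is always finite, so does its maximum. -/

open Ordinal

section Omega1

theorem omega0_lt_Omega1 : ω < Omega1 := by
  rw [Omega1, Cardinal.ord_aleph]
  exact omega0_lt_omega_one

theorem one_lt_Omega1 : 1 < Omega1 := one_lt_omega0.trans omega0_lt_Omega1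

theorem isPrincipal_add_Omega1 : IsPrincipal (· + ·) Omega1 :=
  isPrincipal_add_ord (Cardinal.aleph0_le_aleph 1)

theorem omega0_opow_lt_Omega1 {b : Ordinal.{0}} (hb : b < Omega1) : ω ^ b < Omega1 :=
  isPrincipal_opow_ord (Cardinal.aleph0_le_aleph 1) omega0_lt_Omega1 hb

theorem omega0_opow_Omega1 : ω ^ Omega1 = Omega1 :=
  le_antisymm
    ((opow_le_of_isSuccLimit omega0_ne_zero
      (Cardinal.isSuccLimit_ord (Cardinal.aleph0_le_aleph 1))).2
        fun _ hc => (omega0_opow_lt_Omega1 hc).le)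
    (right_le_opow _ one_lt_omega0)

theorem omega0_opow_Omega1_mul (x : Ordinal.{0}) : ω ^ (Omega1 * x) = Omega1 ^ x := by
  rw [opow_mul, omega0_opow_Omega1]

end Omega1

section Epsilon

variable {γ : Ordinal.{0}}

theorem omega0_le_of_omega0_opow_eq_self (hγ : ω ^ γ = γ) : ω ≤ γ := by
  have hγ0 : γ ≠ 0 := by
    rintro rfl
    simp at hγ
  simpa [hγ] using left_le_opow ω (pos_iff_ne_zero.2 hγ0)

theorem omega0_opow_lt_of_omega0_opow_eq_self (hγ : ω ^ γ = γ) {x : Ordinal.{0}} (hx : x < γ) :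
    ω ^ x < γ :=
  hγ ▸ (opow_lt_opow_iff_right one_lt_omega0).2 hx

theorem isPrincipal_add_of_omega0_opow_eq_self (hγ : ω ^ γ = γ) : IsPrincipal (· + ·) γ :=
  hγ ▸ isPrincipal_add_omega0_opow γ

end Epsilon

section KMem

theorem Ordinal.CNF.snd_le {b o : Ordinal} {x : Ordinal × Ordinal} (h : x ∈ CNF b o) :
    x.2 ≤ o := by
  revert h
  refine CNF.rec b ?_ (fun o ho IH => ?_) o
  · simp [CNF.zero_right]
  · rw [CNF.ne_zero ho, List.mem_cons]
    rintro (rfl | h)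
    · by_cases hb : b ^ log b o = 0
      · simp [hb]
      · exact div_le_of_le_mul (le_mul_right o (pos_iff_ne_zero.2 hb))
    · exact (IH h).trans (mod_le _ _)

theorem Ordinal.CNF.fst_le {b o : Ordinal} {x : Ordinal × Ordinal} (h : x ∈ CNF b o) : x.1 ≤ o :=
  (CNF.fst_le_log h).trans (log_le_self _ _)

theorem KMem.le {β α : Ordinal.{0}} (h : KMem β α) : β ≤ α := by
  induction h with
  | zero => exact le_rfl
  | coeff h => exact CNF.snd_le h
  | expo h _ ih => exact ih.trans (CNF.fst_le h)

theorem KMem.of_opow_mul_add {β e c r : Ordinal.{0}} (hc : c ≠ 0) (hcΩ : c < Omega1)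
    (hr : r < Omega1 ^ e) (h : KMem β (Omega1 ^ e * c + r)) :
    β = c ∨ KMem β e ∨ KMem β r := by
  have hCNF := CNF.opow_mul_add one_lt_Omega1 hc hcΩ hr
  generalize Omega1 ^ e * c + r = α at h hCNF
  cases h with
  | zero => simp [CNF.zero_right] at hCNF
  | coeff h =>
    rcases List.mem_cons.1 (hCNF ▸ h) with h | h
    · exact .inl (Prod.mk.inj h).2
    · exact .inr (.inr (.coeff h))
  | expo h hK =>
    rcases List.mem_cons.1 (hCNF ▸ h) with h | h
    · exact .inr (.inl ((Prod.mk.inj h).1 ▸ hK))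
    · exact .inr (.inr (.expo h hK))

/-- An exponent equal to `α` itself (as for `α = Ω ^ α`) contributes nothing new to `K(α)`;
this is what makes `K(α)` finite. -/
theorem KMem.cases_lt {β α : Ordinal.{0}} (h : KMem β α) :
    β = 0 ∨ ∃ p ∈ CNF Omega1 α, β = p.2 ∨ (p.1 < α ∧ KMem β p.1) := by
  induction h with
  | zero => exact .inl rfl
  | coeff h => exact .inr ⟨_, h, .inl rfl⟩
  | expo h hK ih =>
    rcases (CNF.fst_le h).lt_or_eq with hlt | heq
    · exact .inr ⟨_, h, .inr ⟨hlt, hK⟩⟩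
    · exact heq ▸ ih

theorem KMem.finite (α : Ordinal.{0}) : {β | KMem β α}.Finite := by
  induction α using WellFoundedLT.induction with
  | _ α ih =>
  have hexp (p : Ordinal × Ordinal) : {β | p.1 < α ∧ KMem β p.1}.Finite := by
    by_cases hp : p.1 < α
    · exact (ih _ hp).subset fun β hβ => hβ.2
    · exact Set.finite_empty.subset fun β hβ => hp hβ.1
  refine ((Set.finite_singleton 0).union ((CNF Omega1 α).finite_toSet.biUnion fun p _ =>
    (Set.finite_singleton p.2).union (hexp p))).subset ?_
  intro β hβ
  rcases hβ.cases_lt with h | ⟨p, hp, h⟩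
  · exact .inl h
  · exact .inr (Set.mem_biUnion hp h)

end KMem

def KLt (α γ : Ordinal.{0}) : Prop := ∀ β, KMem β α → β < γ

section KLt

variable {γ : Ordinal.{0}}

theorem kMax_lt_of_kLt {α : Ordinal.{0}} (hγ : 0 < γ) (h : KLt α γ) : kMax α < γ := by
  rcases Set.eq_empty_or_nonempty {β | KMem β α} with he | hne
  · rwa [kMax, he, csSup_empty]
  · exact ((KMem.finite α).csSup_lt_iff hne).2 h

theorem KLt.of_lt {α : Ordinal.{0}} (h : α < γ) : KLt α γ :=
  fun _ hβ => hβ.le.trans_lt h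

theorem KLt.opow_mul_add {e c r : Ordinal.{0}} (hcΩ : c < Omega1) (hr : r < Omega1 ^ e)
    (hc : c < γ) (he : KLt e γ) (hrγ : KLt r γ) : KLt (Omega1 ^ e * c + r) γ := by
  rcases eq_or_ne c 0 with rfl | hc0
  · simpa using hrγ
  · intro β hβ
    rcases hβ.of_opow_mul_add hc0 hcΩ hr with rfl | hβ | hβ
    exacts [hc, he β hβ, hrγ β hβ]

theorem KLt.opow_mul {e c : Ordinal.{0}} (hcΩ : c < Omega1) (hc : c < γ) (he : KLt e γ)
    (hγ : 0 < γ) : KLt (Omega1 ^ e * c) γ := by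
  simpa using KLt.opow_mul_add hcΩ (opow_pos e (zero_lt_one.trans one_lt_Omega1)) hc he
    (.of_lt hγ)

theorem KLt.sub_one {q : Ordinal.{0}} (hγ : ω ≤ γ) (h : KLt q γ) : KLt (q - 1) γ := by
  rcases le_or_gt ω q with hq | hq
  · rwa [← one_add_of_omega0_le hq, Ordinal.add_sub_cancel]
  · exact .of_lt (((sub_le_self q 1).trans_lt hq).trans_le hγ)

end KLt

section omegaPolySum

theorem omegaPolySum_lt_Omega1_opow (a : ℕ → Ordinal.{0}) :
    ∀ n : ℕ, (∀ i ≤ n, a i < Omega1) → omegaPolySum a n < Omega1 ^ ((n + 1 : ℕ) : Ordinal)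
  | 0, h => by simpa [omegaPolySum] using h 0 le_rfl
  | n + 1, h => by
    have ih := omegaPolySum_lt_Omega1_opow a n fun i hi => h i (by omega)
    calc Omega1 ^ ((n + 1 : ℕ) : Ordinal) * a (n + 1) + omegaPolySum a n
        < Omega1 ^ ((n + 1 : ℕ) : Ordinal) * a (n + 1) + Omega1 ^ ((n + 1 : ℕ) : Ordinal) :=
          add_lt_add_right ih _
      _ = Omega1 ^ ((n + 1 : ℕ) : Ordinal) * (a (n + 1) + 1) := by rw [mul_add, mul_one]
      _ ≤ Omega1 ^ ((n + 1 : ℕ) : Ordinal) * Omega1 :=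
          mul_le_mul_right (Order.add_one_le_iff.2 (h (n + 1) le_rfl)) _
      _ = Omega1 ^ ((n + 1 + 1 : ℕ) : Ordinal) := by
          rw [← opow_add_one, Nat.cast_add_one (n + 1)]

theorem omegaPolySum_succ (a : ℕ → Ordinal.{0}) :
    ∀ n : ℕ, omegaPolySum a (n + 1) = Omega1 * omegaPolySum (fun i => a (i + 1)) n + a 0
  | 0 => by simp [omegaPolySum]
  | n + 1 => by
    rw [omegaPolySum, omegaPolySum_succ a n, omegaPolySum]
    rw [show ((n + 1 + 1 : ℕ) : Ordinal) = 1 + ((n + 1 : ℕ) : Ordinal) by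
        rw [show n + 1 + 1 = 1 + (n + 1) by omega, Nat.cast_add, Nat.cast_one],
      opow_add, opow_one, mul_add, mul_assoc, ← add_assoc]

theorem KLt.omegaPolySum {γ : Ordinal.{0}} (hγ : ω ≤ γ) (a : ℕ → Ordinal.{0}) :
    ∀ n : ℕ, (∀ i ≤ n, a i < Omega1) → (∀ i ≤ n, a i < γ) → KLt (omegaPolySum a n) γ
  | 0, _, hlt => .of_lt (hlt 0 le_rfl)
  | n + 1, hcnt, hlt =>
    .opow_mul_add (hcnt _ le_rfl)
      (omegaPolySum_lt_Omega1_opow a n fun i hi => hcnt i (by omega)) (hlt _ le_rfl)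
      (.of_lt ((natCast_lt_omega0 _).trans_le hγ))
      (KLt.omegaPolySum hγ a n (fun i hi => hcnt i (by omega)) fun i hi => hlt i (by omega))

end omegaPolySum

section sigmaStar

theorem sigmaStar_eq_omega0_opow_opow (δ : Ordinal.{0}) :
    ∃ η ≤ δ + 1, sigmaStar δ = ω ^ ω ^ η := by
  unfold sigmaStar
  split_ifs
  · exact ⟨δ - 1, (sub_le_self δ 1).trans le_self_add, rfl⟩
  · exact ⟨δ + 1, le_rfl, rfl⟩
  · exact ⟨δ, le_self_add, rfl⟩

theorem sigmaStar_eq_of_omega0_le {δ : Ordinal.{0}} (hδ : ω ≤ δ) :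
    ∃ t ≤ (1 : Ordinal), sigmaStar δ = ω ^ ω ^ (δ + t) := by
  unfold sigmaStar
  rw [if_neg fun h => hδ.not_gt h.2]
  split_ifs
  · exact ⟨1, le_rfl, rfl⟩
  · exact ⟨0, zero_le_one, by rw [add_zero]⟩

theorem sigmaStar_lt {γ δ : Ordinal.{0}} (hγ : ω ^ γ = γ) (hδ : δ < γ) : sigmaStar δ < γ := by
  obtain ⟨η, hη, hσ⟩ := sigmaStar_eq_omega0_opow_opow δ
  have hδ1 : δ + 1 < γ := isPrincipal_add_of_omega0_opow_eq_self hγ hδ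
    (one_lt_omega0.trans_le (omega0_le_of_omega0_opow_eq_self hγ))
  rw [hσ]
  exact omega0_opow_lt_of_omega0_opow_eq_self hγ
    (omega0_opow_lt_of_omega0_opow_eq_self hγ (hη.trans_lt hδ1))

theorem omega0_opow_opow_Omega1_mul_add {q : Ordinal.{0}} (hq : q ≠ 0) (s : Ordinal.{0}) :
    ω ^ ω ^ (Omega1 * q + s) = Omega1 ^ (Omega1 ^ (q - 1) * ω ^ s) := by
  conv_lhs => rw [← Ordinal.add_sub_cancel_of_le (Order.one_le_iff_ne_zero.2 hq)]
  rw [opow_add, omega0_opow_Omega1_mul, opow_add, opow_one, mul_assoc, omega0_opow_Omega1_mul]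

theorem KLt.sigmaStar_Omega1_mul_add {γ q r : Ordinal.{0}} (hγ : ω ^ γ = γ) (hq : KLt q γ)
    (hrΩ : r < Omega1) (hr : r < γ) : KLt (sigmaStar (Omega1 * q + r)) γ := by
  have hωγ := omega0_le_of_omega0_opow_eq_self hγ
  have hγpos : 0 < γ := omega0_pos.trans_le hωγ
  rcases eq_or_ne q 0 with rfl | hq0
  · simpa using KLt.of_lt (sigmaStar_lt hγ hr)
  obtain ⟨t, ht, hσ⟩ := sigmaStar_eq_of_omega0_le (omega0_lt_Omega1.le.trans
    ((le_mul_left Omega1 (pos_iff_ne_zero.2 hq0)).trans le_self_add))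
  have htΩ : t < Omega1 := ht.trans_lt one_lt_Omega1
  have htγ : t < γ := ht.trans_lt (one_lt_omega0.trans_le hωγ)
  have hsΩ : ω ^ (r + t) < Omega1 := omega0_opow_lt_Omega1 (isPrincipal_add_Omega1 hrΩ htΩ)
  have hsγ : ω ^ (r + t) < γ :=
    omega0_opow_lt_of_omega0_opow_eq_self hγ (isPrincipal_add_of_omega0_opow_eq_self hγ hr htγ)
  rw [hσ, add_assoc, omega0_opow_opow_Omega1_mul_add hq0, ← mul_one (Omega1 ^ _)]
  exact .opow_mul one_lt_Omega1 (one_lt_omega0.trans_le hωγ)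
    (.opow_mul hsΩ hsγ (hq.sub_one hωγ) hγpos) hγpos

end sigmaStar

/-- if `αₙ, …, α₀` are countable ordinals below an epsilon number `γ`,
then `k(σ(Ω^n·αₙ + … + Ω·α₁ + α₀)) < γ`. -/
theorem stmt11 (γ : Ordinal.{0}) (hγ : Ordinal.omega0 ^ γ = γ)
    (nn : ℕ) (a : ℕ → Ordinal.{0})
    (hcnt : ∀ i ≤ nn, a i < Omega1) (hlt : ∀ i ≤ nn, a i < γ) :
    kMax (sigmaStar (omegaPolySum a nn)) < γ := by
  have hωγ := omega0_le_of_omega0_opow_eq_self hγ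
  refine kMax_lt_of_kLt (omega0_pos.trans_le hωγ) ?_
  cases nn with
  | zero => exact .of_lt (sigmaStar_lt hγ (hlt 0 le_rfl))
  | succ n =>
    rw [omegaPolySum_succ]
    exact .sigmaStar_Omega1_mul_add hγ
      (.omegaPolySum hωγ _ n (fun i hi => hcnt _ (by omega)) fun i hi => hlt _ (by omega))
      (hcnt 0 (by omega)) (hlt 0 (by omega))
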